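/- arXiv:2603.19052 — 3 statements merged into one kernel-verified Lean document; each statement's English description precedes it below -/
import Mathlib

section
/- Let $g \geq 2$ be an integer, let $S = \{m \in \mathbb{Z} \mid 0 \leq m \leq g+1 \text{ and } m \equiv g+1 \pmod 2\}$, and let $T = \{(m_1,m_2,m_3) \in S^3 \mid m_1+m_2+m_3 = g+3 \text{ and at most one of } m_1,m_2,m_3 \text{ equals } 0\}$. Suppose $y : \mathbb{Z} \to \mathbb{Q}$ satisfies $y(m_1) + y(m_2) + y(m_3) = 0$ for every $(m_1,m_2,m_3) \in T$, and $y(g+1) = 0$. Then $y(m) = 0$ for every $m \in S$. -/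
/-- The set `S` of integers `m` with `0 ≤ m ≤ g + 1` and `m ≡ g + 1 (mod 2)`. -/
def Sset (g : ℤ) : Set ℤ := {m | 0 ≤ m ∧ m ≤ g + 1 ∧ m ≡ g + 1 [ZMOD 2]}

/-- The set `T` of triples `(m₁, m₂, m₃) ∈ S³` with `m₁ + m₂ + m₃ = g + 3` and at most
one of the `mᵢ` equal to `0`. -/
def Tset (g : ℤ) : Set (ℤ × ℤ × ℤ) :=
  {p | p.1 ∈ Sset g ∧ p.2.1 ∈ Sset g ∧ p.2.2 ∈ Sset g ∧ p.1 + p.2.1 + p.2.2 = g + 3 ∧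
    ¬(p.1 = 0 ∧ p.2.1 = 0) ∧ ¬(p.1 = 0 ∧ p.2.2 = 0) ∧ ¬(p.2.1 = 0 ∧ p.2.2 = 0)}

lemma mem_Sset_iff (g m : ℤ) : m ∈ Sset g ↔ 0 ≤ m ∧ m ≤ g + 1 ∧ m % 2 = (g + 1) % 2 :=
  Iff.rfl

lemma mem_Tset_iff (g a b c : ℤ) : (a, b, c) ∈ Tset g ↔
    a ∈ Sset g ∧ b ∈ Sset g ∧ c ∈ Sset g ∧ a + b + c = g + 3 ∧
    ¬(a = 0 ∧ b = 0) ∧ ¬(a = 0 ∧ c = 0) ∧ ¬(b = 0 ∧ c = 0) := Iff.rfl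

theorem stmt9 (g : ℤ) (hg : 2 ≤ g) (y : ℤ → ℚ)
    (hT : ∀ p ∈ Tset g, y p.1 + y p.2.1 + y p.2.2 = 0)
    (htop : y (g + 1) = 0) :
    ∀ m ∈ Sset g, y m = 0 := by
  have hT' : ∀ a b c : ℤ, (a, b, c) ∈ Tset g → y a + y b + y c = 0 := fun a b c h =>
    hT (a, b, c) h
  rcases Int.even_or_odd g with ⟨n, hn⟩ | ⟨n, hn⟩
  · -- g = 2n even, n ≥ 1, S = odds in [1, 2n+1]
    have hn1 : 1 ≤ n := by omega
    have htop' : y (2 * n + 1) = 0 := by rw [show 2 * n + 1 = g + 1 by omega]; exact htop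
    have P : ∀ m : ℤ, m % 2 = 1 → 1 ≤ m → m ≤ 2 * n + 1 →
        y m + y (2 * n + 2 - m) + y 1 = 0 := by
      intro m h1 h2 h3
      apply hT' m (2 * n + 2 - m) 1
      rw [mem_Tset_iff, mem_Sset_iff, mem_Sset_iff, mem_Sset_iff]
      constructor; · omega
      constructor; · omega
      constructor; · omega
      refine ⟨by omega, by omega, by omega, by omega⟩
    have h1 : y 1 = 0 := by
      have := P (2 * n + 1) (by omega) (by omega) (by omega)
      rw [show 2 * n + 2 - (2 * n + 1) = 1 by ring, htop'] at this
      linarith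
    have pair : ∀ m : ℤ, m % 2 = 1 → 1 ≤ m → m ≤ 2 * n + 1 →
        y (2 * n + 2 - m) = -y m := by
      intro m a b c; have := P m a b c; rw [h1] at this; linarith
    have step : ∀ m : ℤ, m % 2 = 1 → 1 ≤ m → m ≤ 2 * n - 1 →
        y (m + 2) = y m + y 3 := by
      intro m h1' h2 h3
      have hQ : y m + y (2 * n - m) + y 3 = 0 := by
        apply hT' m (2 * n - m) 3
        rw [mem_Tset_iff, mem_Sset_iff, mem_Sset_iff, mem_Sset_iff]
        refine ⟨by omega, by omega, by omega, by omega, by omega, by omega, by omega⟩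
      have hp : y (2 * n - m) = -y (m + 2) := by
        have := pair (m + 2) (by omega) (by omega) (by omega)
        rw [show 2 * n + 2 - (m + 2) = 2 * n - m by ring] at this
        exact this
      rw [hp] at hQ; linarith
    have val : ∀ k : ℕ, (k : ℤ) ≤ n → y (2 * k + 1) = (k : ℚ) * y 3 := by
      intro k
      induction k with
      | zero => intro _; simpa using h1
      | succ k ih =>
        intro hkn
        push_cast at hkn ⊢
        have := step (2 * k + 1) (by omega) (by omega) (by omega)
        rw [show (2 : ℤ) * k + 1 + 2 = 2 * ((k : ℤ) + 1) + 1 by ring] at this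
        rw [this, ih (by omega)]
        ring
    have h3 : y 3 = 0 := by
      have hv := val n.toNat (by omega)
      rw [show ((n.toNat : ℤ)) = n by omega, htop'] at hv
      have hc : ((n.toNat : ℚ)) ≠ 0 := Nat.cast_ne_zero.mpr (by omega)
      rcases mul_eq_zero.mp hv.symm with h | h
      · exact absurd h hc
      · exact h
    intro m hm
    rw [mem_Sset_iff] at hm
    have := val ((m - 1) / 2).toNat (by omega)
    rw [show 2 * (((m - 1) / 2).toNat : ℤ) + 1 = m by omega, h3] at this
    simpa using this
  · -- g = 2n + 1 odd, n ≥ 1, S = evens in [0, 2n+2]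
    have hn1 : 1 ≤ n := by omega
    have htop' : y (2 * n + 2) = 0 := by rw [show 2 * n + 2 = g + 1 by omega]; exact htop
    have A : ∀ m : ℤ, m % 2 = 0 → 2 ≤ m → m ≤ 2 * n + 2 →
        y m + y (2 * n + 4 - m) + y 0 = 0 := by
      intro m h1 h2 h3
      apply hT' m (2 * n + 4 - m) 0
      rw [mem_Tset_iff, mem_Sset_iff, mem_Sset_iff, mem_Sset_iff]
      refine ⟨by omega, by omega, by omega, by omega, by omega, by omega, by omega⟩
    have B : ∀ m : ℤ, m % 2 = 0 → 0 ≤ m → m ≤ 2 * n + 2 →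
        y m + y 2 + y (2 * n + 2 - m) = 0 := by
      intro m h1 h2 h3
      apply hT' m 2 (2 * n + 2 - m)
      rw [mem_Tset_iff, mem_Sset_iff, mem_Sset_iff, mem_Sset_iff]
      refine ⟨by omega, by omega, by omega, by omega, by omega, by omega, by omega⟩
    have h2 : y 2 = -y 0 := by
      have := B 0 (by omega) (by omega) (by omega)
      rw [show (2 : ℤ) * n + 2 - 0 = 2 * n + 2 by ring, htop'] at this
      linarith
    have step : ∀ m : ℤ, m % 2 = 0 → 0 ≤ m → m ≤ 2 * n →
        y (m + 2) = y m - 2 * y 0 := by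
      intro m h1 hm2 hm3
      have hA := A (2 * n + 2 - m) (by omega) (by omega) (by omega)
      rw [show 2 * n + 4 - (2 * n + 2 - m) = m + 2 by ring] at hA
      have hB := B (2 * n + 2 - m) (by omega) (by omega) (by omega)
      rw [show 2 * n + 2 - (2 * n + 2 - m) = m by ring, h2] at hB
      linarith
    have val : ∀ k : ℕ, (k : ℤ) ≤ n + 1 → y (2 * k) = (1 - 2 * (k : ℚ)) * y 0 := by
      intro k
      induction k with
      | zero => intro _; norm_num
      | succ k ih =>
        intro hkn
        push_cast at hkn ⊢
        have := step (2 * k) (by omega) (by omega) (by omega)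
        rw [show (2 : ℤ) * k + 2 = 2 * ((k : ℤ) + 1) by ring] at this
        rw [this, ih (by omega)]
        ring
    have h0 : y 0 = 0 := by
      have hv := val (n.toNat + 1) (by omega)
      push_cast at hv
      rw [show ((n.toNat : ℤ)) = n by omega] at hv
      rw [show (2 : ℤ) * (n + 1) = 2 * n + 2 by ring, htop'] at hv
      have hc : (1 - 2 * ((n.toNat : ℚ) + 1)) ≠ 0 := by
        have : (0 : ℚ) ≤ (n.toNat : ℚ) := by positivity
        intro h; linarith
      rcases mul_eq_zero.mp hv.symm with h | h
      · exact absurd h hc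
      · exact h
    intro m hm
    rw [mem_Sset_iff] at hm
    have := val (m / 2).toNat (by omega)
    rw [show 2 * ((m / 2).toNat : ℤ) = m by omega, h0] at this
    simpa using this
end

section
/- Let $g \geq 2$ be an integer, let $r$ be a rational number, let $S = \{m \in \mathbb{Z} \mid 0 \leq m \leq g+1 \text{ and } m \equiv g+1 \pmod 2\}$, and let $T = \{(m_1,m_2,m_3) \in S^3 \mid m_1+m_2+m_3 = g+3 \text{ and at most one of } m_1,m_2,m_3 \text{ equals } 0\}$. Suppose $f : \mathbb{Z} \to \mathbb{Q}$ satisfies $r + f(m_1) + f(m_2) + f(m_3) = 0$ for every $(m_1,m_2,m_3) \in T$, and $f(g+1) = -r$. Then $f(m) = \frac{r(1-m)}{g}$ for every $m \in S$. -/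
theorem stmt10 (g : ℤ) (hg : 2 ≤ g) (r : ℚ) (f : ℤ → ℚ)
    (hT : ∀ p ∈ Tset g, r + f p.1 + f p.2.1 + f p.2.2 = 0)
    (htop : f (g + 1) = -r) :
    ∀ m ∈ Sset g, f m = r * (1 - (m : ℚ)) / (g : ℚ) := by
  have hgQ : (g : ℚ) ≠ 0 := by positivity
  intro m hm
  obtain ⟨hm0, hm1, hm2⟩ := hm
  have hm2' : m % 2 = (g + 1) % 2 := hm2
  rcases Int.even_or_odd g with ⟨k, hk⟩ | ⟨k, hk⟩
  · -- g even, S consists of odd numbers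
    have hstep : ∀ m : ℤ, 1 ≤ m → m ≤ g - 1 → m % 2 = 1 →
        f (m + 2) = f m + (f 3 - f 1) := by
      intro m h1 h2 h3
      have t1 : r + f (m + 2) + f (g - m) + f 1 = 0 :=
        hT (m + 2, g - m, 1) (by simp only [Tset, Sset, Set.mem_setOf_eq, Int.ModEq, and_true, true_and]; omega)
      have t2 : r + f m + f (g - m) + f 3 = 0 :=
        hT (m, g - m, 3) (by simp only [Tset, Sset, Set.mem_setOf_eq, Int.ModEq, and_true, true_and]; omega)
      linarith
    have hind : ∀ n : ℕ, 2 * (n : ℤ) + 1 ≤ g + 1 →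
        f (2 * (n : ℤ) + 1) = f 1 + (n : ℚ) * (f 3 - f 1) := by
      intro n
      induction n with
      | zero => intro _; norm_num
      | succ n ih =>
        intro hn
        push_cast at hn ⊢
        have h1 : f (2 * (n : ℤ) + 1 + 2) = f (2 * (n : ℤ) + 1) + (f 3 - f 1) :=
          hstep _ (by omega) (by omega) (by omega)
        have h2 := ih (by omega)
        have he : (2 * ((n : ℤ) + 1) + 1) = (2 * (n : ℤ) + 1 + 2) := by ring
        rw [he, h1, h2]
        ring
    have h1 : r + f (g + 1) + f 1 + f 1 = 0 :=
      hT (g + 1, 1, 1) (by simp only [Tset, Sset, Set.mem_setOf_eq, Int.ModEq, and_true, true_and]; omega)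
    have hf1 : f 1 = 0 := by linarith
    have htopEq : f (g + 1) = f 1 + (k : ℚ) * (f 3 - f 1) := by
      obtain ⟨n, hn⟩ : ∃ n : ℕ, (n : ℤ) = k := ⟨k.toNat, by omega⟩
      have h := hind n (by omega)
      have he : 2 * (n : ℤ) + 1 = g + 1 := by omega
      rw [he] at h
      have hnQ : (n : ℚ) = (k : ℚ) := by exact_mod_cast hn
      rw [h, hnQ]
    obtain ⟨n, hn⟩ : ∃ n : ℕ, 2 * (n : ℤ) + 1 = m := ⟨((m - 1) / 2).toNat, by omega⟩
    have hfm := hind n (by omega)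
    rw [hn] at hfm
    have hδ : (k : ℚ) * (f 3 - f 1) = -r := by rw [htop] at htopEq; linarith
    have hgQ' : (g : ℚ) = (k : ℚ) + (k : ℚ) := by exact_mod_cast hk
    have hmQ : (m : ℚ) = 2 * (n : ℚ) + 1 := by exact_mod_cast hn.symm
    have hkQ : (k : ℚ) + (k : ℚ) ≠ 0 := by
      have h1 : (1 : ℚ) ≤ (k : ℚ) := by exact_mod_cast (show (1:ℤ) ≤ k by omega)
      linarith
    rw [hf1] at hfm hδ
    rw [hfm, hmQ, hgQ', eq_div_iff hkQ]
    linear_combination (2 * (n : ℚ)) * hδ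
  · -- g odd, S consists of even numbers
    have hstep : ∀ m : ℤ, 0 ≤ m → m ≤ g - 1 → m % 2 = 0 →
        f (m + 2) = f m + (f 4 - f 2) := by
      intro m h1 h2 h3
      have t1 : r + f (m + 2) + f (g - 1 - m) + f 2 = 0 :=
        hT (m + 2, g - 1 - m, 2) (by simp only [Tset, Sset, Set.mem_setOf_eq, Int.ModEq, and_true, true_and]; omega)
      have t2 : r + f m + f (g - 1 - m) + f 4 = 0 :=
        hT (m, g - 1 - m, 4) (by simp only [Tset, Sset, Set.mem_setOf_eq, Int.ModEq, and_true, true_and]; omega)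
      linarith
    have hind : ∀ n : ℕ, 2 * (n : ℤ) ≤ g + 1 →
        f (2 * (n : ℤ)) = f 0 + (n : ℚ) * (f 4 - f 2) := by
      intro n
      induction n with
      | zero => intro _; norm_num
      | succ n ih =>
        intro hn
        push_cast at hn ⊢
        have h1 : f (2 * (n : ℤ) + 2) = f (2 * (n : ℤ)) + (f 4 - f 2) :=
          hstep _ (by omega) (by omega) (by omega)
        have h2 := ih (by omega)
        have he : (2 * ((n : ℤ) + 1)) = (2 * (n : ℤ) + 2) := by ring
        rw [he, h1, h2]
        ring
    have h1 : r + f (g + 1) + f 0 + f 2 = 0 :=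
      hT (g + 1, 0, 2) (by simp only [Tset, Sset, Set.mem_setOf_eq, Int.ModEq, and_true, true_and]; omega)
    have hf02 : f 0 + f 2 = 0 := by linarith
    have hf2 : f 2 = f 0 + (f 4 - f 2) := by
      have := hstep 0 le_rfl (by omega) (by omega)
      norm_num at this
      linarith
    have htopEq : f (g + 1) = f 0 + ((k : ℚ) + 1) * (f 4 - f 2) := by
      obtain ⟨n, hn⟩ : ∃ n : ℕ, (n : ℤ) = k + 1 := ⟨(k + 1).toNat, by omega⟩
      have h := hind n (by omega)
      have he : 2 * (n : ℤ) = g + 1 := by omega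
      rw [he] at h
      have hnQ : (n : ℚ) = (k : ℚ) + 1 := by exact_mod_cast hn
      rw [h, hnQ]
    obtain ⟨n, hn⟩ : ∃ n : ℕ, 2 * (n : ℤ) = m := ⟨(m / 2).toNat, by omega⟩
    have hfm := hind n (by omega)
    rw [hn] at hfm
    have hδ : f 4 - f 2 = -2 * f 0 := by linarith
    have hx : (2 * (k : ℚ) + 1) * f 0 = r := by
      rw [htop, hδ] at htopEq; linarith
    have hgQ' : (g : ℚ) = 2 * (k : ℚ) + 1 := by exact_mod_cast hk
    have hmQ : (m : ℚ) = 2 * (n : ℚ) := by exact_mod_cast hn.symm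
    rw [hδ] at hfm
    rw [hfm, hmQ, hgQ']
    have hkQ : 2 * (k : ℚ) + 1 ≠ 0 := by
      have h1 : (0 : ℚ) ≤ (k : ℚ) := by exact_mod_cast (show (0:ℤ) ≤ k by omega)
      linarith
    rw [eq_div_iff hkQ]
    linear_combination (1 - 2 * (n : ℚ)) * hx
end

section
/- Let $g \geq 2$ be an even integer, let $S = \{m \in \mathbb{Z} \mid 0 \leq m \leq g+1 \text{ and } m \equiv g+1 \pmod 2\}$ (so $S$ consists of the odd integers $2j+1$ for $0 \leq j \leq g/2$), and let $T = \{(m_1,m_2,m_3) \in S^3 \mid m_1+m_2+m_3 = g+3 \text{ and at most one of } m_1,m_2,m_3 \text{ equals } 0\}$. Suppose $y : \mathbb{Z} \to \mathbb{Q}$ satisfies $y(m_1)+y(m_2)+y(m_3) = 0$ for every $(m_1,m_2,m_3) \in T$. Then the successive differences of $y$ along $S$ are constant: $y(2j+3) - y(2j+1) = y(3) - y(1)$ for every integer $j$ with $0 \leq j$ and $2j+3 \leq g+1$. -/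
theorem stmt11 (g : ℤ) (hg : 2 ≤ g) (hge : Even g) (y : ℤ → ℚ)
    (hT : ∀ p ∈ Tset g, y p.1 + y p.2.1 + y p.2.2 = 0) :
    ∀ j : ℤ, 0 ≤ j → 2 * j + 3 ≤ g + 1 →
      y (2 * j + 3) - y (2 * j + 1) = y 3 - y 1 := by
  intro j hj hjle
  obtain ⟨k, hk⟩ := hge
  have hS1 : (2 * j + 3) ∈ Sset g :=
    ⟨by omega, by omega, show (2 * j + 3) % 2 = (g + 1) % 2 by omega⟩
  have hS2 : (g - 1 - 2 * j) ∈ Sset g :=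
    ⟨by omega, by omega, show (g - 1 - 2 * j) % 2 = (g + 1) % 2 by omega⟩
  have hS3 : (1 : ℤ) ∈ Sset g :=
    ⟨by omega, by omega, show (1 : ℤ) % 2 = (g + 1) % 2 by omega⟩
  have hS4 : (2 * j + 1) ∈ Sset g :=
    ⟨by omega, by omega, show (2 * j + 1) % 2 = (g + 1) % 2 by omega⟩
  have hS5 : (3 : ℤ) ∈ Sset g :=
    ⟨by omega, by omega, show (3 : ℤ) % 2 = (g + 1) % 2 by omega⟩
  have h1 := hT (2 * j + 3, g - 1 - 2 * j, 1)
    (by refine ⟨hS1, hS2, hS3, ?_, ?_, ?_, ?_⟩ <;> dsimp only <;> omega)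
  have h2 := hT (2 * j + 1, g - 1 - 2 * j, 3)
    (by refine ⟨hS4, hS2, hS5, ?_, ?_, ?_, ?_⟩ <;> dsimp only <;> omega)
  simp only at h1 h2
  linarith
end
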